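/- For every seven-dimensional filiform Lie algebra g over a field K of characteristic different from 2, there exist a, b, c, d ∈ K such that g is isomorphic to g^7_{abcd}. -/

import Mathlib

variable (K : Type*) [Field K]

/-- The bracket of the Lie algebra `g^7_{abcd}` on `K^7` (indices `0..6` correspond to
`e_1..e_7`): the only nonzero brackets among basis vectors are `⁅e_1, e_{i+1}⁆ = e_i` for
`2 ≤ i ≤ 6`, `⁅e_4, e_7⁆ = a e_2`, `⁅e_5, e_6⁆ = b e_2`, `⁅e_5, e_7⁆ = c e_2 + (a+b) e_3`
and `⁅e_6, e_7⁆ = d e_2 + c e_3 + (a+b) e_4`. -/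
def g7b (a b c d : K) (x y : Fin 7 → K) : Fin 7 → K :=
  ![0,
    x 0 * y 2 - x 2 * y 0 + a * (x 3 * y 6 - x 6 * y 3) + b * (x 4 * y 5 - x 5 * y 4)
      + c * (x 4 * y 6 - x 6 * y 4) + d * (x 5 * y 6 - x 6 * y 5),
    x 0 * y 3 - x 3 * y 0 + (a + b) * (x 4 * y 6 - x 6 * y 4) + c * (x 5 * y 6 - x 6 * y 5),
    x 0 * y 4 - x 4 * y 0 + (a + b) * (x 5 * y 6 - x 6 * y 5),
    x 0 * y 5 - x 5 * y 0,
    x 0 * y 6 - x 6 * y 0,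
    0]

/-- The Lie algebras `g^7_{abcd}` and `g^7_{ABCD}` are isomorphic: there is a bijective
linear map preserving the brackets. -/
def g7Iso (a b c d A B C D : K) : Prop :=
  ∃ f : (Fin 7 → K) ≃ₗ[K] (Fin 7 → K),
    ∀ x y, f (g7b K a b c d x y) = g7b K A B C D (f x) (f y)

/-- `L` is an `n`-dimensional filiform Lie algebra over `K`. -/
def IsFiliform (L : Type*) [LieRing L] [LieAlgebra K L] (n : ℕ) : Prop :=
  Module.finrank K L = n ∧
    ∀ k : ℕ, 2 ≤ k → k ≤ n →
      Module.finrank K (LieModule.lowerCentralSeries K L L (k - 1)) = n - k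

/-- The Lie algebra `L` is isomorphic to `g^7_{abcd}`. -/
def g7IsoTo (L : Type*) [LieRing L] [LieAlgebra K L] (a b c d : K) : Prop :=
  ∃ f : L ≃ₗ[K] (Fin 7 → K), ∀ u v : L, f ⁅u, v⁆ = g7b K a b c d (f u) (f v)

/-!
Write `𝓒 k` for the lower central series; for a seven-dimensional filiform algebra the quotients
`𝓒 k / 𝓒 (k + 1)` are one-dimensional for `1 ≤ k ≤ 5` and `L / 𝓒 1` is two-dimensional.
The elements `u` with `⁅u, 𝓒 k⁆ ⊆ 𝓒 (k + 2)` form a proper subspace `lcsSkip k ⊇ 𝓒 1`, and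
`lcsSkip 1 ≤ lcsSkip 2` because `⁅𝓒 1, 𝓒 1⁆ ⊆ 𝓒 4`. In characteristic `≠ 2` no vector space is a
union of three proper subspaces, so some `e₁` lies outside `lcsSkip 2`, `lcsSkip 3` and
`lcsSkip 4`; then `ad e₁` maps a generator of each `𝓒 k / 𝓒 (k + 1)` to a generator of the next
quotient. If `y` completes `e₁` to a basis of `L / 𝓒 1`, the vectors
`e₁, (ad e₁)⁵ y, …, ad e₁ y, y` form a basis `e₁, …, e₇` with `⁅e₁, e_{i+1}⁆ = e_i` and
`⁅e_i, e_j⁆ ∈ ⟨e₂, …, e_{i+j-8}⟩`, and replacing `y` by `y - t e₁` removes the `e₅`-component of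
`⁅e₇, e₆⁆`. Five Jacobi identities then reduce the remaining structure constants to those of
`g^7_{abcd}`, except that they only give `2 p² = 0` for the `e₃`-coefficient `p` of `⁅e₆, e₅⁆`:
this is where `char K ≠ 2` is needed a second time.
-/

open Module LieModule

section BasisCoordinates

variable {R M L ι : Type*} [CommRing R] [AddCommGroup M] [Module R M] [LieRing L]
  [LieAlgebra R L] [Fintype ι]

theorem Module.Basis.equivFun_self_eq_single [DecidableEq ι] (B : Basis ι R M) (i : ι) :
    B.equivFun (B i) = Pi.single i 1 := by
  ext j; simp [Pi.single_apply, eq_comm]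

theorem Module.Basis.repr_lie (B : Basis ι R L) (x y : L) (m : ι) :
    B.repr ⁅x, y⁆ m = ∑ k, B.repr y k * B.repr ⁅x, B k⁆ m := by
  conv_lhs => rw [← B.sum_repr y]
  simp only [lie_sum, lie_smul, map_sum, map_smul, Finsupp.finsetSum_apply, Finsupp.smul_apply,
    smul_eq_mul]

end BasisCoordinates

section G7Bracket

variable {K}

theorem g7b_add_left (a b c d : K) (x x' y : Fin 7 → K) :
    g7b K a b c d (x + x') y = g7b K a b c d x y + g7b K a b c d x' y := by
  ext i; fin_cases i <;> simp [g7b] <;> ring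

theorem g7b_smul_left (a b c d t : K) (x y : Fin 7 → K) :
    g7b K a b c d (t • x) y = t • g7b K a b c d x y := by
  ext i; fin_cases i <;> simp [g7b] <;> ring

theorem g7b_swap (a b c d : K) (x y : Fin 7 → K) :
    g7b K a b c d y x = -g7b K a b c d x y := by
  ext i; fin_cases i <;> simp [g7b] <;> ring

theorem g7b_self (a b c d : K) (x : Fin 7 → K) : g7b K a b c d x x = 0 := by
  ext i; fin_cases i <;> simp [g7b] <;> ring

theorem g7b_add_right (a b c d : K) (x y y' : Fin 7 → K) :
    g7b K a b c d x (y + y') = g7b K a b c d x y + g7b K a b c d x y' := by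
  rw [g7b_swap, g7b_add_left, neg_add, ← g7b_swap, ← g7b_swap]

theorem g7b_smul_right (a b c d t : K) (x y : Fin 7 → K) :
    g7b K a b c d x (t • y) = t • g7b K a b c d x y := by
  rw [g7b_swap, g7b_smul_left, ← smul_neg, ← g7b_swap]

def g7bₗ (a b c d : K) : (Fin 7 → K) →ₗ[K] (Fin 7 → K) →ₗ[K] (Fin 7 → K) :=
  LinearMap.mk₂ K (g7b K a b c d) (g7b_add_left a b c d) (g7b_smul_left a b c d)
    (g7b_add_right a b c d) (g7b_smul_right a b c d)

variable {L : Type*} [LieRing L] [LieAlgebra K L]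

theorem g7IsoTo_of_basis (B : Basis (Fin 7) K L) (a b c d : K)
    (h : ∀ i j, i < j → B.equivFun ⁅B i, B j⁆ = g7b K a b c d (Pi.single i 1) (Pi.single j 1)) :
    g7IsoTo K L a b c d := by
  refine ⟨B.equivFun, fun u v => ?_⟩
  have key : ((toEnd K L L : L →ₗ[K] Module.End K L).compr₂ B.equivFun.toLinearMap) =
      (g7bₗ a b c d).compl₁₂ B.equivFun.toLinearMap B.equivFun.toLinearMap := by
    refine LinearMap.ext_basis B B fun i j => ?_
    simp only [LinearMap.compr₂_apply, LinearMap.compl₁₂_apply, LinearEquiv.coe_coe,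
      LieHom.coe_toLinearMap, toEnd_apply_apply, g7bₗ, LinearMap.mk₂_apply,
      B.equivFun_self_eq_single]
    rcases lt_trichotomy i j with hij | rfl | hij
    · exact h i j hij
    · rw [lie_self, map_zero, g7b_self]
    · rw [← lie_skew, map_neg, h j i hij, g7b_swap, neg_neg]
  exact LinearMap.congr_fun₂ key u v

end G7Bracket

namespace LieModule

variable {R L : Type*} [CommRing R] [LieRing L] [LieAlgebra R L]

local notation "𝓒" => lowerCentralSeries R L L

theorem lowerCentralSeries_succ_le_of_lie_mem {k : ℕ} {p : Submodule R L}
    (h : ∀ (x : L), ∀ m ∈ 𝓒 k, ⁅x, m⁆ ∈ p) : (𝓒 (k + 1)).toSubmodule ≤ p := by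
  rw [lowerCentralSeries_succ, LieSubmodule.lieIdeal_oper_eq_linear_span', Submodule.span_le]
  rintro _ ⟨x, -, m, hm, rfl⟩
  exact h x m hm

theorem lie_mem_lowerCentralSeries_succ {k : ℕ} (x : L) {m : L} (hm : m ∈ 𝓒 k) :
    ⁅x, m⁆ ∈ 𝓒 (k + 1) := by
  rw [lowerCentralSeries_succ]
  exact LieSubmodule.lie_mem_lie (LieSubmodule.mem_top x) hm

theorem lie_mem_lowerCentralSeries_add {i j : ℕ} {x y : L} (hx : x ∈ 𝓒 i) (hy : y ∈ 𝓒 j) :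
    ⁅x, y⁆ ∈ 𝓒 (i + j + 1) := by
  induction j generalizing i x y with
  | zero =>
    rw [← lie_skew, neg_mem_iff]
    exact lie_mem_lowerCentralSeries_succ y hx
  | succ j ih =>
    suffices (𝓒 (j + 1)).toSubmodule ≤ (𝓒 (i + (j + 1) + 1)).toSubmodule.comap
      (toEnd R L L x) from this hy
    refine lowerCentralSeries_succ_le_of_lie_mem fun z m hm => ?_
    rw [Submodule.mem_comap, LieSubmodule.mem_toSubmodule, toEnd_apply_apply, leibniz_lie]
    refine add_mem ?_ ?_
    · have hxz : ⁅x, z⁆ ∈ 𝓒 (i + 1) := by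
        rw [← lie_skew, neg_mem_iff]
        exact lie_mem_lowerCentralSeries_succ z hx
      simpa only [Nat.add_right_comm _ 1 j, add_assoc] using ih hxz hm
    · exact lie_mem_lowerCentralSeries_succ z (ih hx hm)

variable (R L) in
def lcsSkip (k : ℕ) : Submodule R L where
  carrier := {u | ∀ m ∈ 𝓒 k, ⁅u, m⁆ ∈ 𝓒 (k + 2)}
  add_mem' hu hv m hm := by rw [add_lie]; exact add_mem (hu m hm) (hv m hm)
  zero_mem' m _ := by rw [zero_lie]; exact zero_mem _
  smul_mem' t u hu m hm := by rw [smul_lie]; exact SMulMemClass.smul_mem t (hu m hm)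

theorem lowerCentralSeries_one_le_lcsSkip (k : ℕ) : (𝓒 1).toSubmodule ≤ lcsSkip R L k :=
  fun _ hu _ hm => by simpa only [add_comm 1 k] using lie_mem_lowerCentralSeries_add hu hm

theorem lcsSkip_ne_top {k : ℕ} (h : ¬ 𝓒 (k + 1) ≤ 𝓒 (k + 2)) : lcsSkip R L k ≠ ⊤ := by
  intro htop
  refine h fun m hm => lowerCentralSeries_succ_le_of_lie_mem (p := (𝓒 (k + 2)).toSubmodule) ?_ hm
  exact fun x m hm => (htop ▸ Submodule.mem_top : x ∈ lcsSkip R L k) m hm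

theorem lie_notMem_of_notMem_lcsSkip {k : ℕ} {u v : L}
    (hv : (𝓒 k).toSubmodule ≤ R ∙ v ⊔ (𝓒 (k + 1)).toSubmodule) (hu : u ∉ lcsSkip R L k) :
    ⁅u, v⁆ ∉ 𝓒 (k + 2) := by
  refine fun huv => hu fun m hm => ?_
  obtain ⟨_, hav, z, hz, rfl⟩ := Submodule.mem_sup.mp (hv hm)
  obtain ⟨a, rfl⟩ := Submodule.mem_span_singleton.mp hav
  rw [lie_add, lie_smul]
  exact add_mem (SMulMemClass.smul_mem a huv) (lie_mem_lowerCentralSeries_succ u hz)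

theorem lie_mem_of_le_span_singleton_sup {k : ℕ} {v a b : L} (hvC : v ∈ 𝓒 k)
    (hv : (𝓒 k).toSubmodule ≤ R ∙ v ⊔ (𝓒 (k + 1)).toSubmodule) (ha : a ∈ 𝓒 k) (hb : b ∈ 𝓒 k) :
    ⁅a, b⁆ ∈ 𝓒 (2 * k + 2) := by
  obtain ⟨_, hav, p, hp, rfl⟩ := Submodule.mem_sup.mp (hv ha)
  obtain ⟨_, hbv, q, hq, rfl⟩ := Submodule.mem_sup.mp (hv hb)
  obtain ⟨α, rfl⟩ := Submodule.mem_span_singleton.mp hav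
  obtain ⟨β, rfl⟩ := Submodule.mem_span_singleton.mp hbv
  have hvq : ⁅v, q⁆ ∈ 𝓒 (2 * k + 2) := by
    simpa only [two_mul, add_assoc] using lie_mem_lowerCentralSeries_add hvC hq
  have hpv : ⁅p, v⁆ ∈ 𝓒 (2 * k + 2) := by
    simpa only [two_mul, add_right_comm] using lie_mem_lowerCentralSeries_add hp hvC
  have hpq : ⁅p, q⁆ ∈ 𝓒 (2 * k + 2) :=
    antitone_lowerCentralSeries R L L (by omega) (lie_mem_lowerCentralSeries_add hp hq)
  simp only [add_lie, lie_add, smul_lie, lie_smul, lie_self, smul_zero, zero_add]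
  exact add_mem (SMulMemClass.smul_mem _ hpv) (add_mem (SMulMemClass.smul_mem _ hvq) hpq)

theorem lcsSkip_one_le_lcsSkip_two {v : L} (hvC : v ∈ 𝓒 1)
    (hv : (𝓒 1).toSubmodule ≤ R ∙ v ⊔ (𝓒 2).toSubmodule) : lcsSkip R L 1 ≤ lcsSkip R L 2 := by
  intro u hu m hm
  suffices (𝓒 (1 + 1)).toSubmodule ≤ (𝓒 4).toSubmodule.comap (toEnd R L L u) from this hm
  refine lowerCentralSeries_succ_le_of_lie_mem fun x c hc => ?_
  rw [Submodule.mem_comap, LieSubmodule.mem_toSubmodule, toEnd_apply_apply, leibniz_lie]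
  refine add_mem ?_ (lie_mem_lowerCentralSeries_succ x (hu c hc))
  exact lie_mem_of_le_span_singleton_sup hvC hv (lie_mem_lowerCentralSeries_succ u
    (by simp : x ∈ 𝓒 0)) hc

theorem lowerCentralSeries_one_le_span_lie_sup {u w : L}
    (h : ⊤ ≤ R ∙ u ⊔ R ∙ w ⊔ (𝓒 1).toSubmodule) :
    (𝓒 1).toSubmodule ≤ R ∙ ⁅u, w⁆ ⊔ (𝓒 2).toSubmodule := by
  set p := R ∙ ⁅u, w⁆ ⊔ (𝓒 2).toSubmodule
  have huw : ⁅u, w⁆ ∈ p := Submodule.mem_sup_left (Submodule.mem_span_singleton_self _)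
  have hself (x : L) : ⁅x, x⁆ ∈ p := by rw [lie_self]; exact zero_mem p
  have hskew {x y : L} (h : ⁅x, y⁆ ∈ p) : ⁅y, x⁆ ∈ p := by rw [← lie_skew]; exact neg_mem h
  have hgen (x : L) (hxu : ⁅x, u⁆ ∈ p) (hxw : ⁅x, w⁆ ∈ p) (m : L) : ⁅x, m⁆ ∈ p := by
    have : ⊤ ≤ p.comap (toEnd R L L x) := h.trans <| sup_le
      (sup_le ((Submodule.span_singleton_le_iff_mem _ _).2 hxu)
        ((Submodule.span_singleton_le_iff_mem _ _).2 hxw))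
      fun c hc => Submodule.mem_sup_right (lie_mem_lowerCentralSeries_succ x hc)
    exact this Submodule.mem_top
  have hu := hgen u (hself u) huw
  have hw := hgen w (hskew huw) (hself w)
  exact lowerCentralSeries_succ_le_of_lie_mem fun x m _ => hgen x (hskew (hu x)) (hskew (hw x)) m

end LieModule

section Subspaces

variable {F V : Type*} [DivisionRing F] [AddCommGroup V] [Module F V]

theorem Submodule.exists_notMem_of_ne_top_of_two_ne_zero (h2 : (2 : F) ≠ 0)
    {P Q R : Submodule F V} (hP : P ≠ ⊤) (hQ : Q ≠ ⊤) (hR : R ≠ ⊤) :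
    ∃ v, v ∉ P ∧ v ∉ Q ∧ v ∉ R := by
  by_contra! hcover
  replace hcover : ∀ v ∉ P, v ∈ Q ∨ v ∈ R := fun v hv => or_iff_not_imp_left.2 (hcover v hv)
  have hPQR : ¬ (P : Set V) ⊆ Q ∪ R := fun hsub => by
    have htop : ((⊤ : Submodule F V) : Set V) ⊆ Q ∪ R := fun v _ => by
      by_cases hv : v ∈ P
      exacts [hsub hv, hcover v hv]
    rcases AddSubgroupClass.subset_union.mp htop with h | h
    exacts [hQ (top_le_iff.mp h), hR (top_le_iff.mp h)]
  obtain ⟨u, huP, huQR⟩ := Set.not_subset.mp hPQR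
  obtain ⟨v, hvP⟩ : ∃ v, v ∉ P := by
    by_contra! h
    exact hP (eq_top_iff.2 fun v _ => h v)
  -- Of the three vectors `v - u`, `v`, `v + u` outside `P`, two lie in `Q` or two in `R`.
  have hline (t : F) : v + t • u ∈ Q ∨ v + t • u ∈ R :=
    hcover _ fun h => hvP (by simpa using sub_mem h (P.smul_mem t huP))
  have htwo (S : Submodule F V) (hu : u ∉ S) {s t : F} (hst : s ≠ t)
      (hs : v + s • u ∈ S) (ht : v + t • u ∈ S) : False := by
    have := sub_mem hs ht
    rw [add_sub_add_left_eq_sub, ← sub_smul] at this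
    exact hu ((S.smul_mem_iff (sub_ne_zero.2 hst)).1 this)
  have h01 : (-1 : F) ≠ 0 := neg_ne_zero.2 one_ne_zero
  have h02 : (-1 : F) ≠ 1 := fun h => h2 (by rw [← one_add_one_eq_two]; nth_rewrite 2 [← h]; exact add_neg_cancel 1)
  have h12 : (0 : F) ≠ 1 := zero_ne_one
  have hQ' {s t : F} : s ≠ t → v + s • u ∈ Q → v + t • u ∈ Q → False :=
    htwo Q fun h => huQR (Or.inl h)
  have hR' {s t : F} : s ≠ t → v + s • u ∈ R → v + t • u ∈ R → False :=
    htwo R fun h => huQR (Or.inr h)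
  rcases hline (-1) with h₁ | h₁ <;> rcases hline 0 with h₂ | h₂ <;> rcases hline 1 with h₃ | h₃
  exacts [hQ' h01 h₁ h₂, hQ' h01 h₁ h₂, hQ' h02 h₁ h₃, hR' h12 h₂ h₃, hQ' h12 h₂ h₃, hR' h02 h₁ h₃,
    hR' h01 h₁ h₂, hR' h01 h₁ h₂]

variable [FiniteDimensional F V]

theorem Submodule.finrank_span_singleton_sup {v : V} {W : Submodule F V} (hv : v ∉ W) :
    finrank F ↥(F ∙ v ⊔ W) = finrank F W + 1 := by
  have hv0 : v ≠ 0 := fun h => hv (h ▸ W.zero_mem)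
  have := Submodule.finrank_sup_add_finrank_inf_eq (F ∙ v) W
  rw [inf_comm, (disjoint_span_singleton_of_notMem hv).eq_bot, finrank_bot,
    finrank_span_singleton hv0] at this
  omega

theorem Submodule.le_span_singleton_sup_of_finrank_eq {v : V} {W W' : Submodule F V}
    (hle : W' ≤ W) (h : finrank F W = finrank F W' + 1) (hv : v ∈ W) (hv' : v ∉ W') :
    W ≤ F ∙ v ⊔ W' :=
  (Submodule.eq_of_le_of_finrank_eq (sup_le ((span_singleton_le_iff_mem _ _).2 hv) hle)
    (by rw [finrank_span_singleton_sup hv', h])).ge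

end Subspaces

/-- `B i` stands for `e_{i+1}`: `⁅e₁, e₂⁆ = 0`, `⁅e₁, e_k⁆ = e_{k-1}` for `k ≥ 3`,
`⁅e_i, e_j⁆ ∈ ⟨e₂, …, e_{i+j-8}⟩` for `i, j ≥ 2`, and `⁅e₇, e₆⁆` has no `e₅`-component. -/
structure IsAdaptedBasis {L : Type*} [LieRing L] [LieAlgebra K L] (B : Basis (Fin 7) K L) :
    Prop where
  lie_zero_one : ⁅B 0, B 1⁆ = 0
  lie_zero_of_two_le : ∀ k : Fin 7, 2 ≤ k → ⁅B 0, B k⁆ = B (k - 1)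
  lie_mem_span : ∀ i j : Fin 7, 1 ≤ i → 1 ≤ j →
    ⁅B i, B j⁆ ∈ Submodule.span K (B '' {m | 1 ≤ m ∧ (m : ℕ) + 7 ≤ i + j})
  repr_lie_six_five : B.repr ⁅B 6, B 5⁆ 4 = 0

namespace IsAdaptedBasis

variable {K} {L : Type*} [LieRing L] [LieAlgebra K L] {B : Basis (Fin 7) K L}

theorem repr_lie_eq_zero (hB : IsAdaptedBasis K B) {i j k : Fin 7} (hi : 1 ≤ i) (hj : 1 ≤ j)
    (hk : ¬ (1 ≤ k ∧ (k : ℕ) + 7 ≤ i + j)) : B.repr ⁅B i, B j⁆ k = 0 :=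
  Finsupp.notMem_support_iff.mp fun h => hk (B.mem_span_image.mp (hB.lie_mem_span i j hi hj) h)

theorem lie_eq_zero (hB : IsAdaptedBasis K B) {i j : Fin 7} (hi : 1 ≤ i) (hj : 1 ≤ j)
    (hij : (i : ℕ) + j ≤ 7) : ⁅B i, B j⁆ = 0 := by
  have hempty : {m : Fin 7 | 1 ≤ m ∧ (m : ℕ) + 7 ≤ i + j} = ∅ := by
    ext m
    simp only [Set.mem_ofPred_eq, Set.mem_empty_iff_false, iff_false, not_and, Fin.le_def]
    omega
  simpa [hempty] using hB.lie_mem_span i j hi hj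

theorem repr_lie_zero_left (hB : IsAdaptedBasis K B) (x : L) {k : Fin 7} (hk1 : 1 ≤ k)
    (hk6 : k < 6) : B.repr ⁅B 0, x⁆ k = B.repr x (k + 1) := by
  have : B.coord k ∘ₗ toEnd K L L (B 0) = B.coord (k + 1) := B.ext fun j => by
    simp only [LinearMap.comp_apply, toEnd_apply_apply, Basis.coord_apply]
    rcases le_or_gt 2 j with hj | hj
    · rw [hB.lie_zero_of_two_le j hj, B.repr_self, B.repr_self, Finsupp.single_apply,
        Finsupp.single_apply]
      simp only [sub_eq_iff_eq_add]
    · have hj' : j ≠ k + 1 := by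
        revert hk1 hk6 hj; revert j k; decide
      obtain rfl | rfl : j = 0 ∨ j = 1 := by omega
      · simp [hj']
      · simp [hB.lie_zero_one, hj']
  exact LinearMap.congr_fun this x

/-- The Jacobi identity for `e₁, e_{i+1}, e_{j+1}`, read off at the coordinate of `e_{k+1}`. -/
theorem repr_lie_succ (hB : IsAdaptedBasis K B) {i j k : Fin 7} (hi : 2 ≤ i := by decide)
    (hj : 2 ≤ j := by decide) (hk1 : 1 ≤ k := by decide) (hk6 : k < 6 := by decide) :
    B.repr ⁅B i, B j⁆ (k + 1) = B.repr ⁅B (i - 1), B j⁆ k + B.repr ⁅B i, B (j - 1)⁆ k := by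
  rw [← hB.repr_lie_zero_left _ hk1 hk6, leibniz_lie, hB.lie_zero_of_two_le i hi,
    hB.lie_zero_of_two_le j hj, map_add, Finsupp.add_apply]

theorem repr_jacobi_six_five_four (hB : IsAdaptedBasis K B) :
    B.repr ⁅B 5, B 4⁆ 2 * B.repr ⁅B 6, B 2⁆ 1 = B.repr ⁅B 6, B 4⁆ 3 * B.repr ⁅B 5, B 3⁆ 1 := by
  have h := congrArg (B.repr · 1) (leibniz_lie (B 6) (B 5) (B 4))
  rw [← lie_skew ⁅B 6, B 5⁆] at h
  simp only [map_add, map_neg, Finsupp.add_apply, Finsupp.neg_apply] at h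
  rw [B.repr_lie (B 6) ⁅B 5, B 4⁆, B.repr_lie (B 4) ⁅B 6, B 5⁆, B.repr_lie (B 5) ⁅B 6, B 4⁆] at h
  simp only [Fin.sum_univ_seven] at h
  simp (disch := decide) only [hB.repr_lie_eq_zero, zero_mul, mul_zero, add_zero, zero_add] at h
  simpa only [lie_self, map_zero, Finsupp.coe_zero, Pi.zero_apply, mul_zero, neg_zero, zero_add]
    using h

theorem g7IsoTo_of_lie_eq (hB : IsAdaptedBasis K B) {a b c d : K}
    (h26 : ⁅B 2, B 6⁆ = 0) (h35 : ⁅B 3, B 5⁆ = 0)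
    (h36 : ⁅B 3, B 6⁆ = a • B 1) (h45 : ⁅B 4, B 5⁆ = b • B 1)
    (h46 : ⁅B 4, B 6⁆ = c • B 1 + (a + b) • B 2)
    (h56 : ⁅B 5, B 6⁆ = d • B 1 + c • B 2 + (a + b) • B 3) :
    g7IsoTo K L a b c d := by
  refine g7IsoTo_of_basis B a b c d fun i j hij => ?_
  fin_cases i <;> fin_cases j
  all_goals simp only [Fin.reduceFinMk, Fin.isValue, Fin.reduceLT] at hij ⊢
  all_goals simp (disch := decide) only [hB.lie_zero_of_two_le, hB.lie_eq_zero, hB.lie_zero_one,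
    h26, h35, h36, h45, h46, h56, Fin.reduceSub, map_add, map_smul, map_zero,
    Basis.equivFun_self_eq_single]
  all_goals ext k; fin_cases k <;> simp [g7b]

theorem exists_g7IsoTo (hB : IsAdaptedBasis K B) (h2 : (2 : K) ≠ 0) :
    ∃ a b c d : K, g7IsoTo K L a b c d := by
  have jac65₁ := hB.repr_lie_succ (i := 6) (j := 5) (k := 1)
  have jac65₂ := hB.repr_lie_succ (i := 6) (j := 5) (k := 2)
  have jac65₃ := hB.repr_lie_succ (i := 6) (j := 5) (k := 3)
  have jac64₁ := hB.repr_lie_succ (i := 6) (j := 4) (k := 1)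
  have jac64₂ := hB.repr_lie_succ (i := 6) (j := 4) (k := 2)
  have jac63₁ := hB.repr_lie_succ (i := 6) (j := 3) (k := 1)
  have jac54₁ := hB.repr_lie_succ (i := 5) (j := 4) (k := 1)
  simp only [Fin.reduceAdd, Fin.reduceSub, lie_self, map_zero, Finsupp.coe_zero, Pi.zero_apply,
    zero_add, hB.repr_lie_six_five] at jac65₁ jac65₂ jac65₃ jac64₁ jac64₂ jac63₁ jac54₁
  have h621 : B.repr ⁅B 6, B 2⁆ 1 = -2 * B.repr ⁅B 5, B 4⁆ 2 := by
    linear_combination -jac63₁ - jac64₂ - jac65₃ + jac54₁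
  have h542 : B.repr ⁅B 5, B 4⁆ 2 = 0 := by
    have : 2 * B.repr ⁅B 5, B 4⁆ 2 ^ 2 = 0 := by
      linear_combination -hB.repr_jacobi_six_five_four + B.repr ⁅B 5, B 4⁆ 2 * h621 +
        B.repr ⁅B 5, B 3⁆ 1 * jac65₃
    exact pow_eq_zero_iff two_ne_zero |>.1 ((mul_eq_zero.1 this).resolve_left h2)
  have h531 : B.repr ⁅B 5, B 3⁆ 1 = 0 := jac54₁ ▸ h542
  have h632 : B.repr ⁅B 6, B 3⁆ 2 = 0 := by linear_combination -jac64₂ - jac65₃ - h542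
  refine ⟨-B.repr ⁅B 6, B 3⁆ 1, -B.repr ⁅B 5, B 4⁆ 1, -B.repr ⁅B 6, B 4⁆ 1,
    -B.repr ⁅B 6, B 5⁆ 1, hB.g7IsoTo_of_lie_eq ?_ ?_ ?_ ?_ ?_ ?_⟩
  all_goals
    conv_lhs => rw [← lie_skew, ← B.sum_repr ⁅_, _⁆]
    simp (disch := decide) only [Fin.sum_univ_seven, hB.repr_lie_eq_zero, hB.repr_lie_six_five,
      h621, h542, h531, h632, ← jac65₃, jac65₁, jac65₂, jac64₁, mul_zero]
    module

end IsAdaptedBasis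

section Filiform

variable {K} {L : Type*} [LieRing L] [LieAlgebra K L]

variable (K) in
def adaptedFamily (e y : L) : Fin 7 → L :=
  fun i => if i = 0 then e else (toEnd K L L e)^[6 - i] y

namespace IsFiliform

local notation "𝓒" => lowerCentralSeries K L L

theorem finiteDimensional (hfil : IsFiliform K L 7) : FiniteDimensional K L :=
  .of_finrank_pos (by rw [hfil.1]; norm_num)

theorem finrank_lowerCentralSeries (hfil : IsFiliform K L 7) {k : ℕ} (hk1 : 1 ≤ k)
    (hk6 : k ≤ 6) : finrank K (𝓒 k).toSubmodule = 6 - k := by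
  have h := hfil.2 (k + 1) (by omega) (by omega)
  rw [Nat.add_sub_cancel, show 7 - (k + 1) = 6 - k by omega] at h
  exact h

theorem lowerCentralSeries_eq_bot (hfil : IsFiliform K L 7) {k : ℕ} (hk : 6 ≤ k) : 𝓒 k = ⊥ := by
  refine eq_bot_iff.2 ((antitone_lowerCentralSeries K L L hk).trans (le_of_eq ?_))
  have := hfil.finiteDimensional
  rw [← LieSubmodule.toSubmodule_eq_bot, ← Submodule.finrank_eq_zero]
  exact hfil.finrank_lowerCentralSeries (by norm_num) le_rfl

theorem lowerCentralSeries_succ_lt (hfil : IsFiliform K L 7) {k : ℕ} (hk1 : 1 ≤ k)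
    (hk5 : k ≤ 5) : 𝓒 (k + 1) < 𝓒 k := by
  refine (antitone_lowerCentralSeries K L L k.le_succ).lt_of_ne fun h => ?_
  have h₁ := hfil.finrank_lowerCentralSeries hk1 (by omega)
  have h₂ := hfil.finrank_lowerCentralSeries (k := k + 1) (by omega) (by omega)
  rw [h] at h₂
  omega

theorem lowerCentralSeries_le_span_singleton_sup (hfil : IsFiliform K L 7) {k : ℕ} (hk1 : 1 ≤ k)
    (hk5 : k ≤ 5) {v : L} (hv : v ∈ 𝓒 k) (hv' : v ∉ 𝓒 (k + 1)) :
    (𝓒 k).toSubmodule ≤ K ∙ v ⊔ (𝓒 (k + 1)).toSubmodule := by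
  have := hfil.finiteDimensional
  refine Submodule.le_span_singleton_sup_of_finrank_eq
    (antitone_lowerCentralSeries K L L k.le_succ) ?_ hv hv'
  have h₁ := hfil.finrank_lowerCentralSeries hk1 (by omega)
  have h₂ := hfil.finrank_lowerCentralSeries (k := k + 1) (by omega) (by omega)
  omega

theorem exists_forall_notMem_lcsSkip (hfil : IsFiliform K L 7) (h2 : (2 : K) ≠ 0) :
    ∃ e : L, ∀ k, 1 ≤ k → k ≤ 4 → e ∉ lcsSkip K L k := by
  have hne (k : ℕ) (hk1 : 1 ≤ k) (hk4 : k ≤ 4) : lcsSkip K L k ≠ ⊤ :=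
    lcsSkip_ne_top (hfil.lowerCentralSeries_succ_lt (k := k + 1) (by omega) (by omega)).not_ge
  obtain ⟨e, he2, he3, he4⟩ := Submodule.exists_notMem_of_ne_top_of_two_ne_zero h2
    (hne 2 (by norm_num) (by norm_num)) (hne 3 (by norm_num) (by norm_num))
    (hne 4 (by norm_num) (by norm_num))
  obtain ⟨v, hv, hv'⟩ := SetLike.exists_of_lt (hfil.lowerCentralSeries_succ_lt le_rfl (by norm_num))
  have he1 : e ∉ lcsSkip K L 1 := fun h =>
    he2 (lcsSkip_one_le_lcsSkip_two hv
      (hfil.lowerCentralSeries_le_span_singleton_sup le_rfl (by norm_num) hv hv') h)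
  refine ⟨e, fun k hk1 hk4 => ?_⟩
  interval_cases k <;> assumption

theorem top_le_span_sup (hfil : IsFiliform K L 7) {e y : L} (he : e ∉ 𝓒 1)
    (hy : y ∉ K ∙ e ⊔ (𝓒 1).toSubmodule) : ⊤ ≤ K ∙ e ⊔ K ∙ y ⊔ (𝓒 1).toSubmodule := by
  have := hfil.finiteDimensional
  have h := Submodule.le_span_singleton_sup_of_finrank_eq le_top ?_ Submodule.mem_top hy
  · rwa [sup_left_comm, ← sup_assoc] at h
  · rw [finrank_top, hfil.1, Submodule.finrank_span_singleton_sup he,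
      hfil.finrank_lowerCentralSeries le_rfl (by norm_num)]

theorem exists_notMem_span_singleton_sup (hfil : IsFiliform K L 7) {e : L} (he : e ∉ 𝓒 1) :
    ∃ y, y ∉ K ∙ e ⊔ (𝓒 1).toSubmodule := by
  have := hfil.finiteDimensional
  obtain ⟨y, -, hy⟩ := SetLike.exists_of_lt (lt_top_iff_ne_top.2 fun
      (h : K ∙ e ⊔ (𝓒 1).toSubmodule = ⊤) => by
    have h6 := Submodule.finrank_span_singleton_sup he
    rw [h, finrank_top, hfil.1, hfil.finrank_lowerCentralSeries le_rfl (by norm_num)] at h6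
    omega)
  exact ⟨y, hy⟩

theorem iterate_toEnd_notMem (hfil : IsFiliform K L 7) {e y : L}
    (he : ∀ k, 1 ≤ k → k ≤ 4 → e ∉ lcsSkip K L k) (hy : y ∉ K ∙ e ⊔ (𝓒 1).toSubmodule)
    {k : ℕ} (hk1 : 1 ≤ k) (hk5 : k ≤ 5) : (toEnd K L L e)^[k] y ∉ 𝓒 (k + 1) := by
  induction k, hk1 using Nat.le_induction with
  | base =>
    have htop := hfil.top_le_span_sup
      (fun h => he 1 le_rfl (by norm_num) (lowerCentralSeries_one_le_lcsSkip 1 h)) hy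
    intro hmem
    refine (hfil.lowerCentralSeries_succ_lt le_rfl (by norm_num)).not_ge ?_
    exact (lowerCentralSeries_one_le_span_lie_sup htop).trans
      (sup_le ((Submodule.span_singleton_le_iff_mem _ _).2 hmem) le_rfl)
  | succ k hk ih =>
    rw [Function.iterate_succ_apply']
    exact lie_notMem_of_notMem_lcsSkip (hfil.lowerCentralSeries_le_span_singleton_sup hk (by omega)
      (iterate_toEnd_mem_lowerCentralSeries K L L e y k) (ih (by omega))) (he k hk (by omega))

theorem lowerCentralSeries_le_span_iterate (hfil : IsFiliform K L 7) {e y : L}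
    (hE : ∀ k, 1 ≤ k → k ≤ 5 → (toEnd K L L e)^[k] y ∉ 𝓒 (k + 1)) {m : ℕ} (hm : 1 ≤ m) :
    (𝓒 m).toSubmodule ≤ Submodule.span K ((fun r => (toEnd K L L e)^[r] y) '' Set.Icc m 5) := by
  set E : ℕ → L := fun r => (toEnd K L L e)^[r] y
  have hbot {k : ℕ} (hk : 6 ≤ k) : (𝓒 k).toSubmodule ≤ Submodule.span K (E '' Set.Icc k 5) := by
    rw [hfil.lowerCentralSeries_eq_bot hk]
    exact bot_le
  obtain h6 | h6 := le_or_gt 6 m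
  · exact hbot h6
  refine Nat.decreasingInduction' (P := fun k => (𝓒 k).toSubmodule ≤
    Submodule.span K (E '' Set.Icc k 5)) (fun k hk6 hk ih => ?_) h6.le (hbot le_rfl)
  have hk1 : 1 ≤ k := hm.trans hk
  refine (hfil.lowerCentralSeries_le_span_singleton_sup hk1 (by omega)
    (iterate_toEnd_mem_lowerCentralSeries K L L e y k) (hE k hk1 (by omega))).trans
    (sup_le ?_ (ih.trans (Submodule.span_mono ?_)))
  · exact (Submodule.span_singleton_le_iff_mem _ _).2
      (Submodule.subset_span ⟨k, ⟨le_rfl, by omega⟩, rfl⟩)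
  · exact Set.image_mono (Set.Icc_subset_Icc (by omega) le_rfl)

theorem lowerCentralSeries_le_span_adaptedFamily (hfil : IsFiliform K L 7) {e y : L}
    (he : ∀ k, 1 ≤ k → k ≤ 4 → e ∉ lcsSkip K L k) (hy : y ∉ K ∙ e ⊔ (𝓒 1).toSubmodule)
    {m : ℕ} (hm : 1 ≤ m) : (𝓒 m).toSubmodule ≤
      Submodule.span K (adaptedFamily K e y '' {l | 1 ≤ l ∧ (l : ℕ) + m ≤ 6}) := by
  refine (hfil.lowerCentralSeries_le_span_iterate
    (fun k hk1 hk5 => hfil.iterate_toEnd_notMem he hy hk1 hk5) hm).trans (Submodule.span_mono ?_)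
  rintro _ ⟨r, ⟨hr1, hr2⟩, rfl⟩
  refine ⟨⟨6 - r, by omega⟩, ⟨by simp [Fin.le_def]; omega, by simp; omega⟩, ?_⟩
  rw [adaptedFamily, if_neg (by simp [Fin.ext_iff]; omega)]
  congr 1
  simp
  omega

theorem top_le_span_adaptedFamily (hfil : IsFiliform K L 7) {e y : L}
    (he : ∀ k, 1 ≤ k → k ≤ 4 → e ∉ lcsSkip K L k) (hy : y ∉ K ∙ e ⊔ (𝓒 1).toSubmodule) :
    ⊤ ≤ Submodule.span K (Set.range (adaptedFamily K e y)) := by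
  have hmem (i : Fin 7) :
      adaptedFamily K e y i ∈ Submodule.span K (Set.range (adaptedFamily K e y)) :=
    Submodule.subset_span ⟨i, rfl⟩
  refine (hfil.top_le_span_sup (fun h => he 1 le_rfl (by norm_num)
    (lowerCentralSeries_one_le_lcsSkip 1 h)) hy).trans (sup_le (sup_le ?_ ?_) ?_)
  · exact (Submodule.span_singleton_le_iff_mem _ _).2 (hmem 0)
  · exact (Submodule.span_singleton_le_iff_mem _ _).2 (hmem 6)
  · exact (hfil.lowerCentralSeries_le_span_adaptedFamily he hy le_rfl).trans
      (Submodule.span_mono (Set.image_subset_range _ _))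

theorem isAdaptedBasis (hfil : IsFiliform K L 7) {e y : L}
    (he : ∀ k, 1 ≤ k → k ≤ 4 → e ∉ lcsSkip K L k) (hy : y ∉ K ∙ e ⊔ (𝓒 1).toSubmodule)
    (hnorm : ⁅y, ⁅e, y⁆⁆ ∈ 𝓒 3) {B : Basis (Fin 7) K L} (hB : ⇑B = adaptedFamily K e y) :
    IsAdaptedBasis K B := by
  have hspan (m : ℕ) (hm : 1 ≤ m) :
      (𝓒 m).toSubmodule ≤ Submodule.span K (B '' {l | 1 ≤ l ∧ (l : ℕ) + m ≤ 6}) :=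
    hB ▸ hfil.lowerCentralSeries_le_span_adaptedFamily he hy hm
  have hmem (i : Fin 7) (hi : 1 ≤ i) : B i ∈ 𝓒 (6 - i) := by
    rw [hB, adaptedFamily, if_neg (by rintro rfl; exact absurd hi (by decide))]
    exact iterate_toEnd_mem_lowerCentralSeries K L L e y _
  refine ⟨?_, fun k hk => ?_, fun i j hi hj => ?_, ?_⟩
  · have h6 := iterate_toEnd_mem_lowerCentralSeries K L L e y 6
    rw [hfil.lowerCentralSeries_eq_bot le_rfl, Function.iterate_succ_apply'] at h6
    simpa [hB, adaptedFamily] using h6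
  · fin_cases k
    all_goals first
      | exact absurd hk (by decide)
      | simp [hB, adaptedFamily, Function.iterate_succ_apply']
  · have := lie_mem_lowerCentralSeries_add (hmem i hi) (hmem j hj)
    refine Submodule.span_mono (Set.image_mono ?_) (hspan _ (by omega) this)
    rintro l ⟨hl1, hl⟩
    exact ⟨hl1, by simp only [Fin.le_def] at hi hj; omega⟩
  · have h := hspan 3 (by norm_num)
      (show ⁅B 6, B 5⁆ ∈ 𝓒 3 by simpa [hB, adaptedFamily] using hnorm)
    exact Finsupp.notMem_support_iff.mp fun h4 => absurd (B.mem_span_image.mp h h4) (by decide)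

theorem exists_isAdaptedBasis (hfil : IsFiliform K L 7) (h2 : (2 : K) ≠ 0) :
    ∃ B : Basis (Fin 7) K L, IsAdaptedBasis K B := by
  obtain ⟨e, he⟩ := hfil.exists_forall_notMem_lcsSkip h2
  obtain ⟨y₀, hy₀⟩ := hfil.exists_notMem_span_singleton_sup
    fun h => he 1 le_rfl (by norm_num) (lowerCentralSeries_one_le_lcsSkip 1 h)
  -- `t` is the `e₅`-coefficient of `⁅y₀, ⁅e, y₀⁆⁆`, removed by passing to `y₀ - t • e`.
  have hC2 : ⁅y₀, ⁅e, y₀⁆⁆ ∈ 𝓒 2 := lie_mem_lowerCentralSeries_add (i := 0) (j := 1)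
    (by simp) (lie_mem_lowerCentralSeries_succ e (by simp))
  obtain ⟨_, ht, z, hz, hyz⟩ := Submodule.mem_sup.mp
    (hfil.lowerCentralSeries_le_span_singleton_sup (k := 2) (by norm_num) (by norm_num)
      (iterate_toEnd_mem_lowerCentralSeries K L L e y₀ 2)
      (hfil.iterate_toEnd_notMem he hy₀ (by norm_num) (by norm_num)) hC2)
  obtain ⟨t, rfl⟩ := Submodule.mem_span_singleton.mp ht
  have hy : y₀ - t • e ∉ K ∙ e ⊔ (𝓒 1).toSubmodule := fun h => hy₀ <| by
    simpa using add_mem h (Submodule.mem_sup_left (Submodule.smul_mem _ t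
      (Submodule.mem_span_singleton_self e)))
  have hnorm : ⁅y₀ - t • e, ⁅e, y₀ - t • e⁆⁆ ∈ 𝓒 3 := by
    convert hz using 1
    simp only [lie_sub, lie_smul, lie_self, smul_zero, sub_zero, sub_lie, smul_lie, ← hyz]
    simp [Function.iterate_succ_apply']
  exact ⟨basisOfTopLeSpanOfCardEqFinrank _ (hfil.top_le_span_adaptedFamily he hy)
    (by simp [hfil.1]), hfil.isAdaptedBasis he hy hnorm (coe_basisOfTopLeSpanOfCardEqFinrank _ _ _)⟩

end IsFiliform

end Filiform

/-- Every seven-dimensional filiform Lie algebra over a field of characteristic different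
from 2 is isomorphic to `g^7_{abcd}` for some `a, b, c, d ∈ K`. -/
theorem stmt12 (hchar : ringChar K ≠ 2) (L : Type*) [LieRing L] [LieAlgebra K L]
    (hfil : IsFiliform K L 7) :
    ∃ a b c d : K, g7IsoTo K L a b c d := by
  have h2 : (2 : K) ≠ 0 := Ring.two_ne_zero hchar
  obtain ⟨B, hB⟩ := hfil.exists_isAdaptedBasis h2
  exact hB.exists_g7IsoTo h2
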